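/- arXiv:2404.16439 — 4 statements merged into one kernel-verified Lean document; each statement's English description precedes it below -/
import Mathlib

section
/- For every r > 0 there exist constants 0 < c ≤ C (depending only on n and r) such that c·|ρ(z,v)| ≤ |ρ(z,u)| ≤ C·|ρ(z,v)| for all z, u, v ∈ T_B with β(u,v) < r. -/
open MeasureTheory Complex Filter Topology
open scoped ENNReal NNReal

noncomputable section

/-- A point of ℂⁿ with n = m+1, written z = (z', zₙ). -/
abbrev Pt (m : ℕ) := (Fin m → ℂ) × ℂ

/-- a·b = Σ aₖ bₖ for a, b ∈ ℂ^{n-1}. -/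
def dotC {m : ℕ} (a b : Fin m → ℂ) : ℂ := ∑ k, a k * b k

/-- ρ(z,w) = (1/4)((z'−conj w')·(z'−conj w') − 2i(zₙ − conj wₙ)). -/
def rhoC {m : ℕ} (z w : Pt m) : ℂ :=
  (1/4) * (dotC (fun k => z.1 k - (starRingEnd ℂ) (w.1 k)) (fun k => z.1 k - (starRingEnd ℂ) (w.1 k))
    - 2 * Complex.I * (z.2 - (starRingEnd ℂ) w.2))

/-- ρ(z) = Im zₙ − |Im z'|². -/
def rho {m : ℕ} (z : Pt m) : ℝ := z.2.im - ∑ k, (z.1 k).im ^ 2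

/-- The tubular domain T_B. -/
def TB (m : ℕ) : Set (Pt m) := { z | ∑ k, (z.1 k).im ^ 2 < z.2.im }

/-- Inverse hyperbolic tangent. -/
def arctanhR (x : ℝ) : ℝ := (1/2) * Real.log ((1 + x) / (1 - x))

/-- The Bergman metric β on T_B. -/
def bMet {m : ℕ} (z w : Pt m) : ℝ :=
  arctanhR (Real.sqrt (1 - rho z * rho w / ‖rhoC z w‖ ^ 2))

/-- The Bergman metric ball D(z,r). -/
def Dball {m : ℕ} (z : Pt m) (r : ℝ) : Set (Pt m) := { w ∈ TB m | bMet z w < r }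

/-- The weighted measure dV_α = ρ(z)^α dV on T_B. -/
def Vw (m : ℕ) (α : ℝ) : Measure (Pt m) :=
  (volume.restrict (TB m)).withDensity (fun z => ENNReal.ofReal (rho z ^ α))

/-- ‖f‖_{p,α} as an extended nonnegative real. -/
def Lnorm {m : ℕ} (p α : ℝ) (f : Pt m → ℂ) : ℝ≥0∞ :=
  (∫⁻ z, ENNReal.ofReal (‖f z‖ ^ p) ∂(Vw m α)) ^ (1/p)

/-- Membership in the Bergman space A^p_α(T_B). -/
def memAp {m : ℕ} (p α : ℝ) (f : Pt m → ℂ) : Prop :=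
  DifferentiableOn ℂ f (TB m) ∧ Lnorm p α f < ⊤

/-- The weighted Bergman kernel K_α(z,w). -/
def Kker (m : ℕ) (α : ℝ) (z w : Pt m) : ℂ :=
  ((Real.Gamma ((m : ℝ) + 1 + α + 1) / (2 ^ (m + 2) * Real.pi ^ (m + 1) * Real.Gamma (α + 1))) : ℝ)
    * rhoC z w ^ (-(((m : ℝ) + 1 + α + 1)) : ℂ)

/-- The point 𝐢 = (0', i). -/
def iPt (m : ℕ) : Pt m := (0, Complex.I)

/-- The Euclidean norm |z| on ℂⁿ. -/
def ptNorm {m : ℕ} (z : Pt m) : ℝ :=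
  Real.sqrt (∑ k, ‖z.1 k‖ ^ 2 + ‖z.2‖ ^ 2)

/-- The unit ball 𝔹_n of ℂⁿ. -/
def unitBall (m : ℕ) : Set (Pt m) := { z | ∑ k, ‖z.1 k‖ ^ 2 + ‖z.2‖ ^ 2 < 1 }

/-- The Cayley-type map Φ : 𝔹_n → T_B. -/
def Phi {m : ℕ} (z : Pt m) : Pt m :=
  ( fun k => (Real.sqrt 2 : ℂ) * z.1 k / (1 + z.2),
    Complex.I * (1 - z.2) / (1 + z.2) - Complex.I * dotC z.1 z.1 / (1 + z.2) ^ 2 )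

/-- The inverse map Φ⁻¹ : T_B → 𝔹_n. -/
def PhiInv {m : ℕ} (w : Pt m) : Pt m :=
  ( fun k => 2 * Complex.I * w.1 k / (Complex.I + w.2 + (Complex.I / 2) * dotC w.1 w.1),
    (Complex.I - w.2 - (Complex.I / 2) * dotC w.1 w.1) / (Complex.I + w.2 + (Complex.I / 2) * dotC w.1 w.1) )

/-- An r-lattice in the Bergman metric. -/
def IsLattice {m : ℕ} (r : ℝ) (a : ℕ → Pt m) : Prop :=
  (∀ k, a k ∈ TB m) ∧ (TB m = ⋃ k, Dball (a k) r) ∧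
    (∀ j k, j ≠ k → Disjoint (Dball (a j) (r/4)) (Dball (a k) (r/4))) ∧
    (∃ N : ℕ, 0 < N ∧ ∀ z ∈ TB m, ∃ s : Finset ℕ, s.card ≤ N ∧
      ∀ k, z ∈ Dball (a k) (2*r) → k ∈ s)

/-- μ is a Carleson measure for A^p_α(T_B). -/
def IsCarleson {m : ℕ} (p α : ℝ) (μ : Measure (Pt m)) : Prop :=
  ∃ C > (0:ℝ), ∀ f : Pt m → ℂ, memAp p α f →
    ∫⁻ z in TB m, ENNReal.ofReal (‖f z‖ ^ p) ∂μ ≤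
      ENNReal.ofReal C * ∫⁻ z, ENNReal.ofReal (‖f z‖ ^ p) ∂(Vw m α)

/-- μ is a vanishing Carleson measure for A^p_α(T_B). -/
def IsVanishingCarleson {m : ℕ} (p α : ℝ) (μ : Measure (Pt m)) : Prop :=
  ∀ f : ℕ → Pt m → ℂ, (∀ k, memAp p α (f k)) → (∃ M : ℝ, ∀ k, Lnorm p α (f k) ≤ ENNReal.ofReal M) →
    (∀ K : Set (Pt m), K ⊆ TB m → IsCompact K → TendstoUniformlyOn f 0 atTop K) →
    Tendsto (fun k => ∫⁻ z in TB m, ENNReal.ofReal (‖f k z‖ ^ p) ∂μ) atTop (nhds 0)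

/-- The space S_t of holomorphic f with sup |ρ(z,𝐢)|^t |f(z)| < ∞. -/
def St (m : ℕ) (t : ℝ) : Set (Pt m → ℂ) :=
  { f | DifferentiableOn ℂ f (TB m) ∧
    ∃ M : ℝ, ∀ z ∈ TB m, ‖rhoC z (iPt m)‖ ^ t * ‖f z‖ ≤ M }

/-- The Berezin-type transform μ̃ of a measure μ. -/
def muTilde (m : ℕ) (α : ℝ) (μ : Measure (Pt m)) (z : Pt m) : ℝ≥0∞ :=
  ∫⁻ w in TB m, ENNReal.ofReal (‖Kker m α z w‖ ^ 2 / ‖Kker m α z z‖) ∂μ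

/-- The averaging function μ̂_r. -/
def muHat (m : ℕ) (α r : ℝ) (μ : Measure (Pt m)) (z : Pt m) : ℝ≥0∞ :=
  μ (Dball z r) / Vw m α (Dball z r)

/-- The Toeplitz operator T_μ. -/
def Toep (m : ℕ) (α : ℝ) (μ : Measure (Pt m)) (f : Pt m → ℂ) (z : Pt m) : ℂ :=
  ∫ w in TB m, Kker m α z w * f w ∂μ

lemma abs_rhoC_symm {m : ℕ} (z w : Pt m) : ‖rhoC w z‖ = ‖rhoC z w‖ := by
  have : rhoC w z = (starRingEnd ℂ) (rhoC z w) := by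
    simp only [rhoC, dotC, map_mul, map_sub, map_sum, map_one, map_div₀, map_ofNat,
      Complex.conj_I, Complex.conj_conj]
    rw [Finset.sum_congr rfl (fun k _ => show (w.1 k - (starRingEnd ℂ) (z.1 k)) * (w.1 k - (starRingEnd ℂ) (z.1 k)) = ((starRingEnd ℂ) (z.1 k) - w.1 k) * ((starRingEnd ℂ) (z.1 k) - w.1 k) from by ring)]
    ring
  rw [this, Complex.norm_conj]

lemma re_rhoC {m : ℕ} (z w : Pt m) :
    (rhoC z w).re = (rho z + rho w)/2 + (1/4) * ∑ k, ‖z.1 k - w.1 k‖ ^ 2 := by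
  have h4 : ∀ k : Fin m, ‖z.1 k - w.1 k‖ ^ 2 =
      ((z.1 k).re - (w.1 k).re)^2 + ((z.1 k).im - (w.1 k).im)^2 := fun k => by
    rw [Complex.sq_norm, Complex.normSq_apply]; simp [Complex.sub_re, Complex.sub_im]; ring
  simp only [rhoC, dotC, Complex.mul_re, Complex.mul_im, Complex.sub_re, Complex.sub_im,
    Complex.re_sum, Complex.im_sum, Complex.conj_re, Complex.conj_im, Complex.I_re, Complex.I_im,
    rho, h4]
  norm_num
  have key : ∀ x : Fin m, ((z.1 x).re - (w.1 x).re) * ((z.1 x).re - (w.1 x).re) - ((z.1 x).im + (w.1 x).im) * ((z.1 x).im + (w.1 x).im) = (((z.1 x).re - (w.1 x).re) ^ 2 + ((z.1 x).im - (w.1 x).im) ^ 2) - 2*(z.1 x).im^2 - 2*(w.1 x).im^2 := fun x => by ring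
  rw [← Finset.sum_sub_distrib, Finset.sum_congr rfl (fun x _ => key x),
    Finset.sum_sub_distrib, Finset.sum_sub_distrib, ← Finset.mul_sum, ← Finset.mul_sum]
  ring

lemma rhoC_identity {m : ℕ} (z u v : Pt m) :
    rhoC z u = rhoC z v + rhoC v u - rhoC v v
      + (1/2) * dotC (fun k => z.1 k - v.1 k)
          (fun k => (starRingEnd ℂ) (v.1 k) - (starRingEnd ℂ) (u.1 k)) := by
  simp only [rhoC, dotC]
  rw [Finset.sum_congr rfl (fun k _ => show
      (z.1 k - (starRingEnd ℂ) (u.1 k)) * (z.1 k - (starRingEnd ℂ) (u.1 k)) =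
      ((z.1 k - (starRingEnd ℂ) (v.1 k)) * (z.1 k - (starRingEnd ℂ) (v.1 k))
       + (v.1 k - (starRingEnd ℂ) (u.1 k)) * (v.1 k - (starRingEnd ℂ) (u.1 k))
       - (v.1 k - (starRingEnd ℂ) (v.1 k)) * (v.1 k - (starRingEnd ℂ) (v.1 k)))
       + 2 * ((z.1 k - v.1 k) * ((starRingEnd ℂ) (v.1 k) - (starRingEnd ℂ) (u.1 k))) from by ring)]
  rw [Finset.sum_add_distrib, Finset.sum_sub_distrib, Finset.sum_add_distrib, ← Finset.mul_sum]
  ring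

lemma rho_pos {m : ℕ} {z : Pt m} (hz : z ∈ TB m) : 0 < rho z := sub_pos.mpr hz

lemma sum_abs_sq_le {m : ℕ} {z w : Pt m} (hz : z ∈ TB m) (hw : w ∈ TB m) :
    (∑ k, ‖z.1 k - w.1 k‖ ^ 2) ≤ 4 * (rhoC z w).re := by
  have h1 := re_rhoC z w
  have := rho_pos hz; have := rho_pos hw
  nlinarith [h1]

lemma re_rhoC_pos {m : ℕ} {z w : Pt m} (hz : z ∈ TB m) (hw : w ∈ TB m) :
    0 < (rhoC z w).re := by
  have h1 := re_rhoC z w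
  have h2 : (0:ℝ) ≤ ∑ k, ‖z.1 k - w.1 k‖ ^ 2 :=
    Finset.sum_nonneg fun k _ => sq_nonneg _
  have := rho_pos hz; have := rho_pos hw
  nlinarith

lemma re_le_abs_rhoC {m : ℕ} (z w : Pt m) : (rhoC z w).re ≤ ‖rhoC z w‖ :=
  le_trans (le_abs_self _) (Complex.abs_re_le_norm _)

lemma abs_rhoC_pos {m : ℕ} {z w : Pt m} (hz : z ∈ TB m) (hw : w ∈ TB m) :
    0 < ‖rhoC z w‖ :=
  lt_of_lt_of_le (re_rhoC_pos hz hw) (re_le_abs_rhoC z w)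

lemma rho_le_two_abs {m : ℕ} {z w : Pt m} (hz : z ∈ TB m) (hw : w ∈ TB m) :
    rho w ≤ 2 * ‖rhoC z w‖ := by
  have h1 := re_rhoC z w
  have h2 : (0:ℝ) ≤ ∑ k, ‖z.1 k - w.1 k‖ ^ 2 :=
    Finset.sum_nonneg fun k _ => sq_nonneg _
  have h3 := re_le_abs_rhoC z w
  have := rho_pos hz
  nlinarith

lemma rhoC_self {m : ℕ} (v : Pt m) : rhoC v v = ((rho v : ℝ) : ℂ) := by
  have hre := re_rhoC v v
  simp only [sub_self, map_zero, norm_zero, ne_eq, OfNat.ofNat_ne_zero, not_false_eq_true, zero_pow,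
    Finset.sum_const_zero, mul_zero, add_zero] at hre
  have him : (rhoC v v).im = 0 := by
    simp only [rhoC, dotC, Complex.mul_im, Complex.sub_im, Complex.sub_re, Complex.mul_re,
      Complex.im_sum, Complex.I_re, Complex.I_im, Complex.conj_re, Complex.conj_im]
    norm_num
  rw [Complex.ext_iff]
  constructor
  · rw [hre]; simp
  · rw [him]; simp

lemma abs_dotC_le {m : ℕ} (a b : Fin m → ℂ) :
    ‖dotC a b‖ ≤ (1/2) * ((∑ k, ‖a k‖^2) + ∑ k, ‖b k‖^2) := by
  calc ‖dotC a b‖ ≤ ∑ k, ‖a k * b k‖ := by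
        simpa [dotC] using norm_sum_le Finset.univ (fun k => a k * b k)
    _ ≤ ∑ k, ((‖a k‖)^2 + (‖b k‖)^2)/2 := by
        refine Finset.sum_le_sum fun k _ => ?_
        rw [norm_mul]
        nlinarith [sq_nonneg (‖a k‖ - ‖b k‖), norm_nonneg (a k), norm_nonneg (b k)]
    _ = (1/2) * ((∑ k, ‖a k‖^2) + ∑ k, ‖b k‖^2) := by
        rw [← Finset.sum_add_distrib]; rw [Finset.mul_sum]; exact Finset.sum_congr rfl fun k _ => by ring

lemma half_bound {m : ℕ} {K : ℝ} (hK : 1 ≤ K) {z u v : Pt m}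
    (hz : z ∈ TB m) (hu : u ∈ TB m) (hv : v ∈ TB m)
    (h : ‖rhoC u v‖ ^ 2 ≤ K * (rho u * rho v)) :
    ‖rhoC z u‖ ≤ (8 + 16*K) * ‖rhoC z v‖ := by
  set A := ‖rhoC z u‖ with hA_def
  set B := ‖rhoC z v‖ with hB_def
  set M := ‖rhoC u v‖ with hM_def
  have hA : 0 < A := abs_rhoC_pos hz hu
  have hB : 0 < B := abs_rhoC_pos hz hv
  have hM : 0 ≤ M := norm_nonneg _
  have hru : rho u ≤ 2 * A := rho_le_two_abs hz hu
  have hrv : rho v ≤ 2 * B := rho_le_two_abs hz hv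
  have hrv0 : 0 < rho v := rho_pos hv
  have hru0 : 0 < rho u := rho_pos hu
  -- triangle from identity
  have htri : A ≤ 4 * B + 2 * M := by
    have hid := rhoC_identity z u v
    have h1 : A ≤ B + ‖rhoC v u‖ + ‖rhoC v v‖
        + ‖(1/2 : ℂ) * dotC (fun k => z.1 k - v.1 k)
          (fun k => (starRingEnd ℂ) (v.1 k) - (starRingEnd ℂ) (u.1 k))‖ := by
      rw [hA_def, hid]
      calc ‖rhoC z v + rhoC v u - rhoC v v + _‖
          ≤ ‖rhoC z v + rhoC v u - rhoC v v‖ + _ := norm_add_le _ _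
        _ ≤ ‖rhoC z v + rhoC v u‖ + ‖rhoC v v‖ + _ := by
            gcongr ?_ + _
            exact norm_sub_le _ _
        _ ≤ ‖rhoC z v‖ + ‖rhoC v u‖ + ‖rhoC v v‖ + _ := by
            gcongr; exact norm_add_le _ _
    have hvu : ‖rhoC v u‖ = M := abs_rhoC_symm v u ▸ (abs_rhoC_symm u v).symm
    have hvv : ‖rhoC v v‖ = rho v := by
      rw [rhoC_self, Complex.norm_real, Real.norm_eq_abs, abs_of_pos hrv0]
    have hdot : ‖(1/2 : ℂ) * dotC (fun k => z.1 k - v.1 k)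
          (fun k => (starRingEnd ℂ) (v.1 k) - (starRingEnd ℂ) (u.1 k))‖ ≤ B + M := by
      rw [norm_mul]
      have habs12 : ‖(1:ℂ)/2‖ = 1/2 := by norm_num [map_div₀]
      have hcs := abs_dotC_le (fun k => z.1 k - v.1 k)
        (fun k => (starRingEnd ℂ) (v.1 k) - (starRingEnd ℂ) (u.1 k))
      have hsum1 : (∑ k, ‖z.1 k - v.1 k‖^2) ≤ 4 * B := by
        have := sum_abs_sq_le hz hv
        have := re_le_abs_rhoC z v
        linarith
      have hsum2 : (∑ k, ‖(starRingEnd ℂ) (v.1 k) - (starRingEnd ℂ) (u.1 k)‖^2) ≤ 4 * M := by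
        have heq : ∀ k : Fin m, ‖(starRingEnd ℂ) (v.1 k) - (starRingEnd ℂ) (u.1 k)‖
            = ‖v.1 k - u.1 k‖ := fun k => by
          rw [← map_sub, Complex.norm_conj]
        have h1 : (∑ k, ‖(starRingEnd ℂ) (v.1 k) - (starRingEnd ℂ) (u.1 k)‖^2)
            = ∑ k, ‖v.1 k - u.1 k‖^2 := Finset.sum_congr rfl fun k _ => by rw [heq]
        rw [h1]
        have := sum_abs_sq_le hv hu
        have h2 := re_le_abs_rhoC v u
        have hvu : ‖rhoC v u‖ = M := abs_rhoC_symm v u ▸ (abs_rhoC_symm u v).symm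
        linarith [hvu ▸ h2]
      calc ‖(1:ℂ)/2‖ * ‖dotC _ _‖ ≤ (1/2) * ((1/2) * (4*B + 4*M)) := by
            rw [habs12]; gcongr; linarith [hcs, hsum1, hsum2]
        _ = B + M := by ring
    linarith [h1, hvu ▸ (le_refl (‖rhoC v u‖)), hvv ▸ (le_refl (‖rhoC v v‖)),
      hdot, hvu.le, hvu.ge, hvv.le, hvv.ge]
  -- M^2 ≤ 4KAB
  have hM2 : M^2 ≤ 4 * K * (A * B) := by
    have h1 : rho u * rho v ≤ 4*(A*B) := by nlinarith
    have h2 : K * (rho u * rho v) ≤ K * (4*(A*B)) :=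
      mul_le_mul_of_nonneg_left h1 (by linarith)
    nlinarith
  -- conclude
  by_cases hcase : A ≤ 4 * B
  · nlinarith
  · push_neg at hcase
    have h1 : (A - 4*B)^2 ≤ 4 * M^2 := by nlinarith
    nlinarith [mul_pos hA hB, sq_nonneg B, sq_nonneg (A - 4*B)]

lemma rho_prod_le_abs_sq {m : ℕ} {u v : Pt m} (hu : u ∈ TB m) (hv : v ∈ TB m) :
    rho u * rho v ≤ ‖rhoC u v‖ ^ 2 := by
  have h1 := re_rhoC u v
  have h2 : (0:ℝ) ≤ ∑ k, ‖u.1 k - v.1 k‖ ^ 2 :=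
    Finset.sum_nonneg fun k _ => sq_nonneg _
  have h3 := re_le_abs_rhoC u v
  have h4 := rho_pos hu; have h5 := rho_pos hv
  nlinarith [sq_nonneg (rho u - rho v)]

lemma bMet_extract {m : ℕ} {u v : Pt m} {r : ℝ} (hr : 0 < r) (hu : u ∈ TB m) (hv : v ∈ TB m)
    (h : bMet u v < r) :
    ‖rhoC u v‖ ^ 2 ≤ (Real.exp (2*r) + 1)^2 / (4 * Real.exp (2*r)) * (rho u * rho v) := by
  set E := Real.exp (2*r) with hE_def
  have hE : 1 < E := by
    rw [hE_def, show (1:ℝ) = Real.exp 0 by simp]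
    exact Real.exp_lt_exp.mpr (by linarith)
  set Q := ‖rhoC u v‖ ^ 2 with hQ_def
  set P := rho u * rho v with hP_def
  have hP : 0 < P := mul_pos (rho_pos hu) (rho_pos hv)
  have hQ : 0 < Q := pow_pos (abs_rhoC_pos hu hv) 2
  have hPQ : P ≤ Q := rho_prod_le_abs_sq hu hv
  set t := P / Q with ht_def
  have ht0 : 0 < t := div_pos hP hQ
  have ht1 : t ≤ 1 := (div_le_one hQ).mpr hPQ
  set s := Real.sqrt (1 - t) with hs_def
  have hs0 : 0 ≤ s := Real.sqrt_nonneg _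
  have hsq : s^2 = 1 - t := Real.sq_sqrt (by linarith)
  have hs1 : s < 1 := by nlinarith [hsq, hs0, ht0]
  have harc : arctanhR s < r := h
  have hfrac : (1 + s) / (1 - s) < E := by
    have hpos : 0 < (1 + s) / (1 - s) := div_pos (by linarith) (by linarith)
    have hlog : Real.log ((1 + s) / (1 - s)) < 2 * r := by
      have h' : (1/2) * Real.log ((1 + s) / (1 - s)) < r := harc
      linarith
    calc (1 + s) / (1 - s) = Real.exp (Real.log ((1 + s) / (1 - s))) := (Real.exp_log hpos).symm
      _ < Real.exp (2*r) := Real.exp_lt_exp.mpr hlog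
  have hslt : s < (E - 1) / (E + 1) := by
    rw [div_lt_iff₀ (by linarith : (0:ℝ) < 1 - s)] at hfrac
    rw [lt_div_iff₀ (by linarith : (0:ℝ) < E + 1)]
    nlinarith
  have hs2 : s^2 ≤ ((E - 1) / (E + 1))^2 :=
    pow_le_pow_left₀ hs0 hslt.le 2
  have ht_lb : 4 * E / (E + 1)^2 ≤ t := by
    have hE1 : (0:ℝ) < E + 1 := by linarith
    have hkey : ((E - 1) / (E + 1))^2 = 1 - 4*E/(E+1)^2 := by
      field_simp; ring
    rw [hkey] at hs2
    rw [hsq] at hs2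
    linarith
  have h0 := (le_div_iff₀ hQ).mp ht_lb
  rw [div_mul_eq_mul_div, div_le_iff₀ (by positivity : (0:ℝ) < (E+1)^2)] at h0
  rw [div_mul_eq_mul_div, le_div_iff₀ (by positivity : (0:ℝ) < 4*E)]
  linarith

/-- |ρ(z,u)| ≃ |ρ(z,v)| when β(u,v) < r. -/
theorem stmt_1 (m : ℕ) (r : ℝ) (hr : 0 < r) :
    ∃ c C : ℝ, 0 < c ∧ c ≤ C ∧
      ∀ z ∈ TB m, ∀ u ∈ TB m, ∀ v ∈ TB m, bMet u v < r →
        c * ‖rhoC z v‖ ≤ ‖rhoC z u‖ ∧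
        ‖rhoC z u‖ ≤ C * ‖rhoC z v‖ := by
  set E := Real.exp (2*r) with hE_def
  have hE : 1 < E := by
    rw [hE_def, show (1:ℝ) = Real.exp 0 by simp]
    exact Real.exp_lt_exp.mpr (by linarith)
  set K := (E+1)^2/(4*E) with hK_def
  have hK : 1 ≤ K := by
    rw [hK_def, le_div_iff₀ (by linarith : (0:ℝ) < 4*E)]
    nlinarith [sq_nonneg (E-1)]
  refine ⟨1/(8 + 16*K), 8 + 16*K, by positivity, ?_, ?_⟩
  · have hC : 1 ≤ 8 + 16*K := by nlinarith
    calc 1/(8 + 16*K) ≤ 1 := by rw [div_le_one (by linarith)]; linarith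
      _ ≤ 8 + 16*K := hC
  · intro z hz u hu v hv hβ
    have h2 : ‖rhoC u v‖^2 ≤ K * (rho u * rho v) := bMet_extract hr hu hv hβ
    have h2' : ‖rhoC v u‖^2 ≤ K * (rho v * rho u) := by
      rw [abs_rhoC_symm, mul_comm (rho v)]; exact h2
    have hAB : ‖rhoC z u‖ ≤ (8 + 16*K) * ‖rhoC z v‖ :=
      half_bound hK hz hu hv h2
    have hBA : ‖rhoC z v‖ ≤ (8 + 16*K) * ‖rhoC z u‖ :=
      half_bound hK hz hv hu h2'
    refine ⟨?_, hAB⟩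
    rw [div_mul_eq_mul_div, div_le_iff₀ (by nlinarith : (0:ℝ) < 8 + 16*K)]
    calc 1 * ‖rhoC z v‖ = ‖rhoC z v‖ := one_mul _
      _ ≤ (8 + 16*K) * ‖rhoC z u‖ := hBA
      _ = ‖rhoC z u‖ * (8 + 16*K) := mul_comm _ _

end
end

section
/- For every z ∈ T_B, the complex Jacobian determinant of Φ^{-1} at z equals i / (2 ρ(z,𝐢)^{n+1}), and consequently the real Jacobian determinant of Φ^{-1} at z, viewing Φ^{-1} as a map from an open subset of ℝ^{2n} to ℝ^{2n}, equals 1 / (4 |ρ(z,𝐢)|^{2(n+1)}). -/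
open MeasureTheory Complex Filter Topology
open scoped ENNReal NNReal

noncomputable section

-- ===== auxiliary development =====

open Matrix in
lemma det_blocksXY {ι : Type*} [Fintype ι] [DecidableEq ι] (X Y : Matrix ι ι ℂ) :
    (Matrix.fromBlocks X (-Y) Y X).det = (X + Complex.I • Y).det * (X - Complex.I • Y).det := by
  have key : Matrix.fromBlocks X (-Y) Y X =
      (Matrix.fromBlocks 1 (-(Complex.I • 1)) 0 1) *
        (Matrix.fromBlocks (X + Complex.I • Y) 0 Y (X - Complex.I • Y)) *
        (Matrix.fromBlocks 1 (Complex.I • 1) 0 1) := by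
    rw [Matrix.fromBlocks_multiply, Matrix.fromBlocks_multiply]
    ext (i|i) (j|j) <;>
      simp [Matrix.mul_apply, Matrix.one_apply, Matrix.smul_apply, mul_ite, ite_mul,
        Finset.sum_ite_eq, Finset.sum_ite_eq', Complex.I_mul_I, Matrix.add_apply,
        Matrix.sub_apply, Matrix.neg_apply] <;> ring_nf <;> simp [Complex.I_sq]
  rw [key, Matrix.det_mul, Matrix.det_mul, Matrix.det_fromBlocks_zero₂₁,
    Matrix.det_fromBlocks_zero₂₁, Matrix.det_fromBlocks_zero₁₂]
  simp

lemma det_restrictScalars_cplx {V : Type*} [AddCommGroup V] [Module ℂ V] [Module ℝ V]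
    [IsScalarTower ℝ ℂ V] [FiniteDimensional ℂ V] (f : V →ₗ[ℂ] V) :
    LinearMap.det (f.restrictScalars ℝ) = Complex.normSq (LinearMap.det f) := by
  classical
  set b := Module.finBasis ℂ V with hb
  set Z := LinearMap.toMatrix b b f with hZ
  set X : Matrix _ _ ℝ := Z.map Complex.re with hX
  set Y : Matrix _ _ ℝ := Z.map Complex.im with hY
  let bR := Complex.basisOneI.smulTower b
  let e : (Fin 2 × Fin (Module.finrank ℂ V)) ≃ _ :=
    (finTwoEquiv.prodCongr (Equiv.refl _)).trans (Equiv.boolProdEquivSum _)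
  have hmat : LinearMap.toMatrix bR bR (f.restrictScalars ℝ) =
      (Matrix.fromBlocks X (-Y) Y X).submatrix e e := by
    ext ⟨k, i⟩ ⟨l, j⟩
    rw [LinearMap.toMatrix_apply]
    have happ : (f.restrictScalars ℝ) (bR (l, j)) = Complex.basisOneI l • f (b j) := by
      simp only [bR, Module.Basis.smulTower_apply, LinearMap.coe_restrictScalars]
      exact f.map_smul _ _
    rw [happ]
    have hrepr : bR.repr (Complex.basisOneI l • f (b j)) (k, i) =
        Complex.basisOneI.repr (Complex.basisOneI l * (b.repr (f (b j)) i)) k := by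
      rw [Module.Basis.smulTower_repr]
      congr 1
      simp [smul_eq_mul]
    rw [hrepr]
    have hZij : b.repr (f (b j)) i = Z i j := (LinearMap.toMatrix_apply b b f i j).symm
    rw [hZij]
    fin_cases k <;> fin_cases l <;>
      simp [e, Complex.coe_basisOneI_repr, Complex.coe_basisOneI, X, Y,
        Matrix.submatrix_apply, finTwoEquiv]
  have hdet : LinearMap.det (f.restrictScalars ℝ) = (Matrix.fromBlocks X (-Y) Y X).det := by
    rw [← LinearMap.det_toMatrix bR, hmat, Matrix.det_submatrix_equiv_self]
  have hofReal : (Complex.ofRealHom : ℝ →+* ℂ) (Matrix.fromBlocks X (-Y) Y X).det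
      = Complex.normSq (LinearMap.det f) := by
    rw [RingHom.map_det]
    have hmap : (Complex.ofRealHom.mapMatrix (Matrix.fromBlocks X (-Y) Y X)) =
        Matrix.fromBlocks (X.map Complex.ofRealHom) (-(Y.map Complex.ofRealHom))
          (Y.map Complex.ofRealHom) (X.map Complex.ofRealHom) := by
      ext (i|i) (j|j) <;> simp [X, Y]
    rw [hmap, det_blocksXY]
    have h1 : X.map Complex.ofRealHom + Complex.I • Y.map Complex.ofRealHom = Z := by
      ext i j
      simp [X, Y, Matrix.add_apply, Matrix.smul_apply, Complex.ext_iff]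
    have h2 : X.map Complex.ofRealHom - Complex.I • Y.map Complex.ofRealHom =
        Z.map (starRingEnd ℂ) := by
      ext i j
      simp [X, Y, Matrix.sub_apply, Matrix.smul_apply, Complex.ext_iff]
    rw [h1, h2, show Z.map ⇑(starRingEnd ℂ) = (starRingEnd ℂ).mapMatrix Z from
      (RingHom.mapMatrix_apply _ _).symm, ← RingHom.map_det, ← LinearMap.det_toMatrix b f]
    exact Complex.mul_conj _
  rw [Complex.ofRealHom_eq_coe] at hofReal
  rw [hdet]
  exact Complex.ofReal_injective hofReal


namespace S7
variable {m : ℕ}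

def Dd (w : Pt m) : ℂ := Complex.I + w.2 + (Complex.I/2) * dotC w.1 w.1

def Pk (m : ℕ) (k : Fin m) : Pt m →L[ℂ] ℂ :=
  (ContinuousLinearMap.proj k).comp (ContinuousLinearMap.fst ℂ (Fin m → ℂ) ℂ)

def Sn (m : ℕ) : Pt m →L[ℂ] ℂ := ContinuousLinearMap.snd ℂ (Fin m → ℂ) ℂ

def El (z : Pt m) : Pt m →L[ℂ] ℂ := Sn m + Complex.I • (∑ k, z.1 k • Pk m k)

def Lmap (z : Pt m) : Pt m →L[ℂ] Pt m :=
  (ContinuousLinearMap.pi fun k =>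
    (2*Complex.I/Dd z) • Pk m k - (2*Complex.I*z.1 k/(Dd z)^2) • El z).prod
  ((-(2*Complex.I/(Dd z)^2)) • El z)

@[simp] lemma Pk_apply (k : Fin m) (v : Pt m) : Pk m k v = v.1 k := rfl
@[simp] lemma Sn_apply (v : Pt m) : Sn m v = v.2 := rfl
@[simp] lemma El_apply (z v : Pt m) : El z v = v.2 + Complex.I * ∑ k, z.1 k * v.1 k := by
  simp [El, ContinuousLinearMap.sum_apply, Finset.mul_sum]

lemma Lmap_apply (z v : Pt m) :
    Lmap z v = (fun k => (2*Complex.I/Dd z) * v.1 k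
        - (2*Complex.I*z.1 k/(Dd z)^2) * (v.2 + Complex.I * ∑ j, z.1 j * v.1 j),
      -(2*Complex.I/(Dd z)^2) * (v.2 + Complex.I * ∑ j, z.1 j * v.1 j)) := by
  refine Prod.ext ?_ ?_ <;> simp [Lmap, smul_eq_mul]

lemma hasFDerivAt_PhiInv (z : Pt m) (hD : Dd z ≠ 0) :
    HasFDerivAt (PhiInv (m := m)) (Lmap z) z := by
  have hPk : ∀ k, HasFDerivAt (fun w : Pt m => w.1 k) (Pk m k) z :=
    fun k => (Pk m k).hasFDerivAt
  have hsnd : HasFDerivAt (fun w : Pt m => w.2) (Sn m) z := (Sn m).hasFDerivAt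
  have hdot : HasFDerivAt (fun w : Pt m => dotC w.1 w.1)
      (∑ k, (z.1 k • Pk m k + z.1 k • Pk m k)) z := by
    have := HasFDerivAt.fun_sum (fun k (_ : k ∈ Finset.univ) => (hPk k).fun_mul (hPk k))
    simpa [dotC] using this
  have hDd : HasFDerivAt (Dd (m := m)) (El z) z := by
    have h := ((hasFDerivAt_const Complex.I z).add hsnd).add (hdot.const_mul (Complex.I/2))
    refine h.congr_fderiv ?_
    refine ContinuousLinearMap.ext fun v => ?_
    simp [El, ContinuousLinearMap.sum_apply, Finset.mul_sum]
    exact Finset.sum_congr rfl fun k _ => by ring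
  have hinv : HasFDerivAt (fun w : Pt m => (Dd w)⁻¹)
      ((ContinuousLinearMap.smulRight (1 : ℂ →L[ℂ] ℂ) (-((Dd z)^2)⁻¹)).comp (El z)) z :=
    (hasFDerivAt_inv hD).comp z hDd
  have hgk : ∀ k, HasFDerivAt (fun w : Pt m => 2*Complex.I*w.1 k / Dd w)
      ((2*Complex.I*z.1 k) • ((ContinuousLinearMap.smulRight (1 : ℂ →L[ℂ] ℂ)
          (-((Dd z)^2)⁻¹)).comp (El z)) + (Dd z)⁻¹ • ((2*Complex.I) • Pk m k)) z := by
    intro k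
    have := ((hPk k).const_mul (2*Complex.I)).fun_mul hinv
    simpa [div_eq_mul_inv] using this
  have hc2 : HasFDerivAt (fun w : Pt m => Complex.I - w.2 - (Complex.I/2) * dotC w.1 w.1)
      ((0 - Sn m) - (Complex.I/2) • (∑ k, (z.1 k • Pk m k + z.1 k • Pk m k))) z :=
    ((hasFDerivAt_const Complex.I z).sub hsnd).sub (hdot.const_mul (Complex.I/2))
  have hg2 : HasFDerivAt
      (fun w : Pt m => (Complex.I - w.2 - (Complex.I/2) * dotC w.1 w.1) / Dd w)
      ((Complex.I - z.2 - (Complex.I/2) * dotC z.1 z.1) •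
          ((ContinuousLinearMap.smulRight (1 : ℂ →L[ℂ] ℂ) (-((Dd z)^2)⁻¹)).comp (El z))
        + (Dd z)⁻¹ • ((0 - Sn m) - (Complex.I/2) • (∑ k, (z.1 k • Pk m k + z.1 k • Pk m k)))) z := by
    have := hc2.fun_mul hinv
    simpa [div_eq_mul_inv] using this
  have hfull := HasFDerivAt.prodMk (hasFDerivAt_pi.2 hgk) hg2
  refine HasFDerivAt.congr_fderiv hfull ?_
  refine ContinuousLinearMap.ext fun v => Prod.ext ?_ ?_
  · funext k
    have hv : Dd z * Dd z ≠ 0 := mul_ne_zero hD hD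
    simp [Lmap, ContinuousLinearMap.sum_apply, Finset.mul_sum, smul_eq_mul]
    field_simp
    ring
  · have hc : Complex.I - z.2 - (Complex.I/2)*dotC z.1 z.1 = 2*Complex.I - Dd z := by
      simp only [Dd]; ring
    simp only [ContinuousLinearMap.add_apply, ContinuousLinearMap.smul_apply,
      ContinuousLinearMap.comp_apply, ContinuousLinearMap.smulRight_apply,
      ContinuousLinearMap.one_apply, ContinuousLinearMap.sub_apply,
      ContinuousLinearMap.zero_apply, ContinuousLinearMap.coe_sum', Finset.sum_apply, Lmap,
      ContinuousLinearMap.prod_apply, Sn_apply, Pk_apply, El_apply, smul_eq_mul, hc]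
    have hsum : ∑ k, (z.1 k • Pk m k + z.1 k • Pk m k) v = 2 * ∑ k, z.1 k * v.1 k := by
      simp [ContinuousLinearMap.sum_apply, Finset.sum_add_distrib, two_mul,
        Finset.mul_sum, smul_eq_mul]
    rw [Finset.sum_add_distrib]
    field_simp
    ring

lemma det_Lmap (z : Pt m) (hD : Dd z ≠ 0) :
    LinearMap.det ((Lmap z : Pt m →ₗ[ℂ] Pt m)) =
      -(2*Complex.I/(Dd z)^2) * (2*Complex.I/Dd z)^m := by
  classical
  set D := Dd z with hDdef
  let B : Module.Basis (Fin m ⊕ Unit) ℂ (Pt m) :=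
    (Pi.basisFun ℂ (Fin m)).prod (Module.Basis.singleton Unit ℂ)
  rw [← LinearMap.det_toMatrix B]
  have hB1 : ∀ j : Fin m, B (Sum.inl j) = (Pi.single j 1, 0) := by
    intro j
    refine Prod.ext ?_ ?_
    · rw [Module.Basis.prod_apply_inl_fst]; simp [Pi.basisFun_apply]
    · rw [Module.Basis.prod_apply_inl_snd]
  have hB2 : B (Sum.inr ()) = (0, 1) := by
    refine Prod.ext ?_ ?_
    · rw [Module.Basis.prod_apply_inr_fst]
    · rw [Module.Basis.prod_apply_inr_snd]; simp
  have hdot1 : ∀ j : Fin m, (∑ k, z.1 k * (Pi.single j (1:ℂ) : Fin m → ℂ) k) = z.1 j := by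
    intro j
    rw [Finset.sum_eq_single j] <;> simp +contextual [Pi.single_apply]
  have hmat : LinearMap.toMatrix B B (Lmap z : Pt m →ₗ[ℂ] Pt m) =
      Matrix.fromBlocks
        (Matrix.of fun i j => (2*Complex.I/D) * (if i = j then 1 else 0) + 2*z.1 i*z.1 j/D^2)
        (Matrix.of fun i (_ : Unit) => -(2*Complex.I*z.1 i/D^2))
        (Matrix.of fun (_ : Unit) j => 2*z.1 j/D^2)
        (Matrix.of fun (_ : Unit) (_ : Unit) => -(2*Complex.I/D^2)) := by
    ext p q
    rw [LinearMap.toMatrix_apply]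
    rcases p with i | _ <;> rcases q with j | _ <;>
      simp only [B, ContinuousLinearMap.coe_coe, hB1, hB2, Lmap_apply, Module.Basis.prod_repr_inl,
        Module.Basis.prod_repr_inr, Pi.basisFun_repr, Module.Basis.singleton_repr,
        Matrix.fromBlocks_apply₁₁, Matrix.fromBlocks_apply₁₂, Matrix.fromBlocks_apply₂₁,
        Matrix.fromBlocks_apply₂₂, Matrix.of_apply, hdot1]
    · by_cases h : i = j <;>
        simp [B, Module.Basis.prod_repr_inl, Pi.basisFun_repr, Pi.single_apply, h, hdot1] <;>
          ring_nf <;> simp [Complex.I_sq] <;> try ring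
    · simp [B, Module.Basis.prod_repr_inl, Pi.basisFun_repr] <;>
        ring_nf <;> simp [Complex.I_sq] <;> try ring
      exact Or.inl rfl
    · simp [B, Module.Basis.prod_repr_inr, Module.Basis.singleton_repr, Pi.single_apply, hdot1] <;>
        ring_nf <;> simp [Complex.I_sq] <;> try ring
    · simp [B, Module.Basis.prod_repr_inr, Module.Basis.singleton_repr] <;>
        ring_nf <;> simp [Complex.I_sq] <;> try ring
  rw [hmat]
  have h2 : (2*Complex.I/D^2) ≠ 0 :=
    div_ne_zero (by simp [Complex.I_ne_zero]) (pow_ne_zero 2 hD)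
  have hdne : -(2*Complex.I/D^2) ≠ 0 := neg_ne_zero.mpr h2
  letI : Invertible (Matrix.of fun (_ : Unit) (_ : Unit) => -(2*Complex.I/D^2)) :=
    ⟨Matrix.of fun _ _ => (-(2*Complex.I/D^2))⁻¹,
      by ext i j; simp [Matrix.mul_apply, inv_mul_cancel₀ hdne, Matrix.one_apply]; field_simp,
      by ext i j; simp [Matrix.mul_apply, mul_inv_cancel₀ hdne, Matrix.one_apply, hD]⟩
  rw [Matrix.det_fromBlocks₂₂]
  have hinvOf : (⅟(Matrix.of fun (_ : Unit) (_ : Unit) => -(2*Complex.I/D^2)) :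
      Matrix Unit Unit ℂ) = Matrix.of fun _ _ => (-(2*Complex.I/D^2))⁻¹ := rfl
  have hSchur : (Matrix.of fun i j => (2*Complex.I/D) * (if i = j then 1 else 0) + 2*z.1 i*z.1 j/D^2)
      - (Matrix.of fun i (_ : Unit) => -(2*Complex.I*z.1 i/D^2)) *
        (⅟(Matrix.of fun (_ : Unit) (_ : Unit) => -(2*Complex.I/D^2))) *
        (Matrix.of fun (_ : Unit) j => 2*z.1 j/D^2)
      = (2*Complex.I/D) • (1 : Matrix (Fin m) (Fin m) ℂ) := by
    rw [hinvOf]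
    ext i j
    simp only [Matrix.sub_apply, Matrix.mul_apply, Matrix.of_apply, Matrix.smul_apply,
      Matrix.one_apply, Finset.univ_unique, Finset.sum_singleton, smul_eq_mul]
    by_cases h : i = j <;> simp only [h, if_true, if_false] <;>
      field_simp <;> ring_nf <;> simp [Complex.I_sq] <;>
      try rw [mul_right_comm, mul_inv_cancel₀ (pow_ne_zero 7 hD), one_mul]
  rw [hSchur, Matrix.det_smul, Matrix.det_one, Matrix.det_unique]
  simp

end S7

lemma Dd_eq_rho {m : ℕ} (z : Pt m) : S7.Dd z = 2 * Complex.I * rhoC z (iPt m) := by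
  simp only [S7.Dd, rhoC, iPt, dotC, map_zero, Pi.zero_apply, Complex.conj_I, sub_zero,
    sub_neg_eq_add]
  linear_combination (z.2 + Complex.I) * Complex.I_sq

lemma rho_re_pos {m : ℕ} (z : Pt m) (hz : z ∈ TB m) : 0 < (rhoC z (iPt m)).re := by
  have h1 : (rhoC z (iPt m)).re
      = (1/4) * ((∑ k, ((z.1 k).re^2 - (z.1 k).im^2)) + 2*z.2.im + 2) := by
    simp [rhoC, dotC, iPt, Complex.mul_re, Complex.mul_im, Complex.re_sum, Complex.im_sum,
      pow_two]
    ring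
  have h2 : (0:ℝ) ≤ ∑ k, (z.1 k).re^2 := Finset.sum_nonneg fun k _ => sq_nonneg _
  have h3 : ∑ k, (z.1 k).im^2 < z.2.im := hz
  have h4 : (0:ℝ) ≤ ∑ k, (z.1 k).im^2 := Finset.sum_nonneg fun k _ => sq_nonneg _
  have h5 : ∑ k, ((z.1 k).re^2 - (z.1 k).im^2)
      = (∑ k, (z.1 k).re^2) - ∑ k, (z.1 k).im^2 := Finset.sum_sub_distrib ..
  rw [h1, h5]
  linarith


/-- the complex and real Jacobian determinants of Φ⁻¹. -/
theorem stmt_7 (m : ℕ) (z : Pt m) (hz : z ∈ TB m) :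
    LinearMap.det ((fderiv ℂ (PhiInv (m := m)) z) : Pt m →ₗ[ℂ] Pt m) =
      Complex.I / (2 * rhoC z (iPt m) ^ (m + 2)) ∧
    LinearMap.det ((fderiv ℝ (PhiInv (m := m)) z) : Pt m →ₗ[ℝ] Pt m) =
      1 / (4 * ‖rhoC z (iPt m)‖ ^ (2 * (m + 2))) := by
  have hre := rho_re_pos z hz
  set ρ := rhoC z (iPt m) with hρdef
  have hρne : ρ ≠ 0 := fun h => by simp [h] at hre
  have hD : S7.Dd z ≠ 0 := by
    rw [Dd_eq_rho]
    exact mul_ne_zero (mul_ne_zero two_ne_zero Complex.I_ne_zero) hρne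
  have hder := S7.hasFDerivAt_PhiInv z hD
  have hdetC : LinearMap.det ((S7.Lmap z : Pt m →ₗ[ℂ] Pt m))
      = Complex.I / (2 * ρ ^ (m + 2)) := by
    rw [S7.det_Lmap z hD, Dd_eq_rho]
    have hI2 : ((2:ℂ)*Complex.I*ρ)^2 = -(4*ρ^2) := by
      linear_combination (4*ρ^2) * Complex.I_sq
    have e1 : 2*Complex.I/(2*Complex.I*ρ) = ρ⁻¹ := by
      field_simp
    rw [hI2, e1, inv_pow, div_neg, neg_neg]
    field_simp
    ring
  constructor
  · rw [hder.fderiv]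
    exact hdetC
  · have hderR := hder.restrictScalars ℝ
    rw [hderR.fderiv]
    have hco : (((S7.Lmap z).restrictScalars ℝ : Pt m →L[ℝ] Pt m) : Pt m →ₗ[ℝ] Pt m)
        = ((S7.Lmap z : Pt m →ₗ[ℂ] Pt m)).restrictScalars ℝ := rfl
    rw [hco, det_restrictScalars_cplx, hdetC]
    have h2 : Complex.normSq (Complex.I / (2 * ρ ^ (m + 2)))
        = 1 / (4 * ‖ρ‖ ^ (2 * (m + 2))) := by
      rw [map_div₀ Complex.normSq, map_mul Complex.normSq, map_pow Complex.normSq,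
        Complex.normSq_I, show Complex.normSq 2 = 4 by norm_num [Complex.normSq_apply],
        show Complex.normSq ρ = ‖ρ‖ ^ 2 from (Complex.sq_norm ρ).symm, ← pow_mul]
    rw [h2]

end
end

section
/- For all z, w ∈ T_B one has 2|ρ(z,w)| ≥ max{ρ(z), ρ(w)}. -/
open MeasureTheory Complex Filter Topology
open scoped ENNReal NNReal

noncomputable section

/-- 2|ρ(z,w)| ≥ max{ρ(z), ρ(w)}. -/
theorem stmt_9 (m : ℕ) (z w : Pt m) (hz : z ∈ TB m) (hw : w ∈ TB m) :
    max (rho z) (rho w) ≤ 2 * ‖rhoC z w‖ := by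
  have hz' : 0 < rho z := sub_pos.mpr hz
  have hw' : 0 < rho w := sub_pos.mpr hw
  have hre_eq : (rhoC z w).re = (1/4) *
      ((∑ k, (((z.1 k).re - (w.1 k).re)^2 - ((z.1 k).im + (w.1 k).im)^2))
        + 2*(z.2.im + w.2.im)) := by
    simp only [rhoC, dotC, Complex.mul_re, Complex.mul_im, Complex.sub_re, Complex.sub_im,
      Complex.add_re, Complex.add_im, Complex.I_re, Complex.I_im, Complex.conj_re,
      Complex.conj_im, Complex.re_sum, Complex.im_sum, Complex.one_re, Complex.one_im,
      Complex.re_ofNat, Complex.im_ofNat, Complex.div_re, Complex.div_im,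
      Complex.normSq_ofNat]
    have e1 : (∑ x : Fin m, (((z.1 x).re - (w.1 x).re) * ((z.1 x).re - (w.1 x).re) -
        ((z.1 x).im - -(w.1 x).im) * ((z.1 x).im - -(w.1 x).im))) =
        ∑ k, (((z.1 k).re - (w.1 k).re)^2 - ((z.1 k).im + (w.1 k).im)^2) :=
      Finset.sum_congr rfl fun k _ => by ring
    rw [e1]
    ring
  have hsum : rho z + rho w ≤ 2 * (rhoC z w).re := by
    rw [hre_eq]
    have h : ∑ k, (-((z.1 k).im^2) - (w.1 k).im^2) ≤
        ∑ k, ((1/2) * ((z.1 k).re - (w.1 k).re)^2 - (1/2) * ((z.1 k).im + (w.1 k).im)^2) := by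
      refine Finset.sum_le_sum fun k _ => ?_
      nlinarith [sq_nonneg ((z.1 k).re - (w.1 k).re), sq_nonneg ((z.1 k).im - (w.1 k).im)]
    rw [Finset.sum_sub_distrib, Finset.sum_sub_distrib, Finset.sum_neg_distrib, ← Finset.mul_sum, ← Finset.mul_sum] at h
    simp only [rho]
    rw [Finset.sum_sub_distrib]
    linarith
  have habs : (rhoC z w).re ≤ ‖rhoC z w‖ := Complex.re_le_norm _
  have : max (rho z) (rho w) ≤ rho z + rho w :=
    max_le (by linarith) (by linarith)
  linarith
end
end

section
/- |ρ(z,𝐢)| → ∞ as |z| → ∞ within T_B; that is, for every M > 0 there exists R > 0 such that |ρ(z,𝐢)| > M for every z ∈ T_B with |z| > R. -/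
open MeasureTheory Complex Filter Topology
open scoped ENNReal NNReal

noncomputable section

/-- |ρ(z,𝐢)| → ∞ as |z| → ∞ within T_B. -/
theorem stmt_13 (m : ℕ) :
    ∀ M > (0:ℝ), ∃ R > (0:ℝ), ∀ z ∈ TB m, R < ptNorm z →
      M < ‖rhoC z (iPt m)‖ := by
  intro M hM
  refine ⟨Real.sqrt (8*M + 52*M^2) + 1, by positivity, ?_⟩
  intro z hz hR
  by_contra hle
  push_neg at hle
  set A := ‖rhoC z (iPt m)‖ with hAdef
  clear_value A
  have hA0 : 0 ≤ A := hAdef ▸ norm_nonneg _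
  have hrho : rhoC z (iPt m) = (1/4) * (dotC z.1 z.1 + 2 - 2*Complex.I*z.2) := by
    simp only [rhoC, iPt, dotC, Pi.zero_apply, map_zero, Complex.conj_I, sub_zero]
    ring_nf
    rw [Complex.I_sq]
    simp only [pow_two]
    ring
  set Sx := ∑ k, (z.1 k).re^2 with hSx
  set Sy := ∑ k, (z.1 k).im^2 with hSy
  clear_value Sx Sy
  have hSx0 : 0 ≤ Sx := hSx ▸ Finset.sum_nonneg fun k _ => sq_nonneg _
  have hSy0 : 0 ≤ Sy := hSy ▸ Finset.sum_nonneg fun k _ => sq_nonneg _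
  have hdre : (dotC z.1 z.1).re = Sx - Sy := by
    simp [dotC, Complex.re_sum, Complex.mul_re, hSx, hSy, sq,
      Finset.sum_sub_distrib]
  have hdim : (dotC z.1 z.1).im = ∑ k, 2*((z.1 k).re*(z.1 k).im) := by
    simp [dotC, Complex.im_sum, Complex.mul_im, two_mul, mul_comm]
  have hre : (rhoC z (iPt m)).re = (1/4) * (Sx - Sy + 2 + 2*z.2.im) := by
    rw [hrho]
    simp [Complex.mul_re, Complex.mul_im, Complex.add_re, Complex.add_im,
      Complex.sub_re, Complex.sub_im, hdre]
  have him : (rhoC z (iPt m)).im = (1/4) * ((dotC z.1 z.1).im - 2*z.2.re) := by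
    rw [hrho]
    simp [Complex.mul_re, Complex.mul_im, Complex.add_re, Complex.add_im,
      Complex.sub_re, Complex.sub_im]
  have hreA : (rhoC z (iPt m)).re ≤ A := hAdef ▸ Complex.re_le_norm _
  have himA : |(rhoC z (iPt m)).im| ≤ A := hAdef ▸ Complex.abs_im_le_norm _
  have hTB : Sy < z.2.im := hSy ▸ hz
  -- bounds from real part
  have h1 : Sx - Sy + 2 + 2*z.2.im ≤ 4*A := by
    rw [hre] at hreA; linarith
  have hyn : z.2.im ≤ 4*A := by linarith
  have hyn0 : 0 ≤ z.2.im := le_of_lt (lt_of_le_of_lt hSy0 hTB)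
  have hSxA : Sx ≤ 4*A := by linarith
  have hSyA : Sy ≤ 4*A := by linarith
  -- bound on dot im
  have hdimA : |(dotC z.1 z.1).im| ≤ Sx + Sy := by
    rw [hdim]
    calc |∑ k, 2*((z.1 k).re*(z.1 k).im)| ≤ ∑ k, |2*((z.1 k).re*(z.1 k).im)| :=
          Finset.abs_sum_le_sum_abs _ _
      _ ≤ ∑ k, ((z.1 k).re^2 + (z.1 k).im^2) := by
          refine Finset.sum_le_sum fun k _ => ?_
          have h := two_mul_le_add_sq |(z.1 k).re| |(z.1 k).im|
          rw [_root_.sq_abs, _root_.sq_abs] at h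
          calc |2*((z.1 k).re*(z.1 k).im)| = 2 * |(z.1 k).re| * |(z.1 k).im| := by
                rw [abs_mul, abs_mul, _root_.abs_two]; ring
            _ ≤ _ := h
      _ = Sx + Sy := by rw [hSx, hSy, ← Finset.sum_add_distrib]
  have hxn : |z.2.re| ≤ 6*A := by
    have h2 : |(dotC z.1 z.1).im - 2*z.2.re| ≤ 4*A := by
      rw [him, abs_mul] at himA
      rw [abs_of_pos (by norm_num : (0:ℝ) < 1/4)] at himA
      linarith
    have := abs_sub_abs_le_abs_sub (2*z.2.re) (dotC z.1 z.1).im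
    rw [abs_sub_comm] at this
    have h2re : |2*z.2.re| = 2*|z.2.re| := by rw [abs_mul]; norm_num
    linarith [hdimA, h2, this, hSxA, hSyA]
  -- assemble ptNorm bound
  have hsum : ∑ k, ‖z.1 k‖ ^ 2 + ‖z.2‖ ^ 2
      = (Sx + Sy) + (z.2.re^2 + z.2.im^2) := by
    rw [hSx, hSy, ← Finset.sum_add_distrib]
    congr 1
    · exact Finset.sum_congr rfl fun k _ => by
        rw [Complex.sq_norm, Complex.normSq_apply]; ring
    · rw [Complex.sq_norm, Complex.normSq_apply]; ring
  have hxn2 : z.2.re^2 ≤ 36*A^2 := by nlinarith [abs_nonneg z.2.re, _root_.sq_abs z.2.re]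
  have hyn2 : z.2.im^2 ≤ 16*A^2 := by nlinarith
  have hbound : ∑ k, ‖z.1 k‖ ^ 2 + ‖z.2‖ ^ 2 ≤ 8*M + 52*M^2 := by
    have hAM2 : A^2 ≤ M^2 := pow_le_pow_left₀ hA0 hle 2
    rw [hsum]
    linarith
  have hpt : ptNorm z ≤ Real.sqrt (8*M + 52*M^2) := by
    rw [ptNorm]
    exact Real.sqrt_le_sqrt hbound
  have : Real.sqrt (8*M + 52*M^2) + 1 < Real.sqrt (8*M + 52*M^2) := lt_of_lt_of_le hR hpt
  linarith
end
end
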